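/- arXiv:math/0403081 — 3 statements merged into one kernel-verified Lean document; each statement's English description precedes it below -/
import Mathlib

section
/- In any recollement situation, there is a short exact sequence of natural transformations 0 → i_*i^!j_! → j_! → j_* → i_*i*j_* → 0, where the middle map is the norm N. -/
open CategoryTheory Limits

universe v u v' u' v'' u''

/-- A recollement situation of abelian categories `A'`, `A`, `A''`. -/
structure Recollement (A' : Type u') (A : Type u) (A'' : Type u'')
    [Category.{v'} A'] [Category.{v} A] [Category.{v''} A'']
    [Abelian A'] [Abelian A] [Abelian A''] where
  /-- the functor `i^* : A → A'` -/
  iStar : A ⥤ A'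
  /-- the functor `i_* : A' → A` -/
  iLower : A' ⥤ A
  /-- the functor `i^! : A → A'` -/
  iShriek : A ⥤ A'
  /-- the functor `j_! : A'' → A` -/
  jShriek : A'' ⥤ A
  /-- the functor `j^* : A → A''` -/
  jStar : A ⥤ A''
  /-- the functor `j_* : A'' → A` -/
  jLower : A'' ⥤ A
  iStar_additive : iStar.Additive
  iLower_additive : iLower.Additive
  iShriek_additive : iShriek.Additive
  jShriek_additive : jShriek.Additive
  jStar_additive : jStar.Additive
  jLower_additive : jLower.Additive
  /-- `j_!` is left adjoint to `j^*` -/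
  adj₁ : jShriek ⊣ jStar
  /-- `j^*` is left adjoint to `j_*` -/
  adj₂ : jStar ⊣ jLower
  /-- `i^*` is left adjoint to `i_*` -/
  adj₃ : iStar ⊣ iLower
  /-- `i_*` is left adjoint to `i^!` -/
  adj₄ : iLower ⊣ iShriek
  /-- the unit `Id → j^* j_!` is an isomorphism -/
  isIso_adj₁_unit : IsIso adj₁.unit
  /-- the counit `j^* j_* → Id` is an isomorphism -/
  isIso_adj₂_counit : IsIso adj₂.counit
  /-- the counit `i^* i_* → Id` is an isomorphism -/
  isIso_adj₃_counit : IsIso adj₃.counit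
  /-- the unit `Id → i^! i_*` is an isomorphism -/
  isIso_adj₄_unit : IsIso adj₄.unit
  iLower_full : iLower.Full
  iLower_faithful : iLower.Faithful
  /-- `i_*` is an embedding onto the full subcategory of objects killed by `j^*` -/
  essImage_iLower : ∀ (X : A), iLower.essImage X ↔ IsZero (jStar.obj X)

attribute [instance] Recollement.iStar_additive Recollement.iLower_additive
  Recollement.iShriek_additive Recollement.jShriek_additive Recollement.jStar_additive
  Recollement.jLower_additive Recollement.isIso_adj₁_unit Recollement.isIso_adj₂_counit
  Recollement.isIso_adj₃_counit Recollement.isIso_adj₄_unit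
  Recollement.iLower_full Recollement.iLower_faithful

variable {A' : Type u'} {A : Type u} {A'' : Type u''}
    [Category.{v'} A'] [Category.{v} A] [Category.{v''} A'']
    [Abelian A'] [Abelian A] [Abelian A'']

namespace Recollement

/-- The norm `N : j_! ⟶ j_*`, whose component at `X` corresponds to the identity of `X`
under `Hom(j_!X, j_*X) ≅ Hom(X, j^*j_*X) ≅ Hom(X, X)`. -/
noncomputable def norm (R : Recollement A' A A'') : R.jShriek ⟶ R.jLower where
  app X := (R.adj₁.homEquiv X (R.jLower.obj X)).symm (inv (R.adj₂.counit.app X))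
  naturality {X Y} f := by
    have h : f ≫ inv (R.adj₂.counit.app Y) =
        inv (R.adj₂.counit.app X) ≫ R.jStar.map (R.jLower.map f) := by
      rw [← cancel_mono (R.adj₂.counit.app Y)]
      have := R.adj₂.counit.naturality f
      simp only [Functor.comp_map, Functor.id_map] at this
      simp [this]
    rw [← Adjunction.homEquiv_naturality_left_symm, h,
      Adjunction.homEquiv_naturality_right_symm]

/-- The intermediate extension `j_!* := Im (N : j_! → j_*)`. -/
noncomputable def jMid (R : Recollement A' A A'') : A'' ⥤ A where
  obj X := image (R.norm.app X)
  map {X Y} f := image.map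
    ((Arrow.homMk _ _ (R.norm.naturality f) :
      Arrow.mk (R.norm.app X) ⟶ Arrow.mk (R.norm.app Y)))
  map_id X := by
    have : (Arrow.homMk _ _ (R.norm.naturality (𝟙 X)) :
        Arrow.mk (R.norm.app X) ⟶ Arrow.mk (R.norm.app X)) = 𝟙 (Arrow.mk (R.norm.app X)) := by
      ext <;> simp
    rw [this, image.map_id]
    rfl
  map_comp {X Y Z} f g := by
    rw [← image.map_comp]
    congr 1
    ext <;> simp

end Recollement

/-!
`j^*` is exact and kills exactly the essential image of `i_*`. Since `j^*N` is an isomorphism,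
the kernel and cokernel of `N` lie in that image. An object `i_*W` maps to `Y` only through the
counit `i_*i^!Y ⟶ Y`, uniquely because `i_*` is full, and `Y` maps to `i_*W` only through the
unit `Y ⟶ i_*i^*Y`. This identifies the kernel and cokernel of `N`. Applied to the kernel of the
counit and the cokernel of the unit, the same uniqueness shows that the counit is mono and the
unit is epi.
-/

namespace CategoryTheory

namespace Adjunction

variable {C D : Type*} [Category C] [Category D] {F : C ⥤ D} {G : D ⥤ C}

lemma exists_comp_counit_eq (adj : F ⊣ G) {K Y : D} (hK : F.essImage K) (f : K ⟶ Y) :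
    ∃ h : K ⟶ F.obj (G.obj Y), h ≫ adj.counit.app Y = f := by
  obtain ⟨W, ⟨e⟩⟩ := hK
  refine ⟨e.inv ≫ F.map (adj.homEquiv W Y (e.hom ≫ f)), ?_⟩
  rw [Category.assoc, ← adj.homEquiv_counit W Y, Equiv.symm_apply_apply, Iso.inv_hom_id_assoc]

lemma exists_unit_comp_eq (adj : F ⊣ G) {Y K : C} (hK : G.essImage K) (f : Y ⟶ K) :
    ∃ h : G.obj (F.obj Y) ⟶ K, adj.unit.app Y ≫ h = f := by
  obtain ⟨W, ⟨e⟩⟩ := hK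
  refine ⟨G.map ((adj.homEquiv Y W).symm (f ≫ e.inv)) ≫ e.hom, ?_⟩
  rw [← Category.assoc, ← adj.homEquiv_unit Y W, Equiv.apply_symm_apply, Category.assoc,
    Iso.inv_hom_id, Category.comp_id]

lemma cancel_counit [F.Full] (adj : F ⊣ G) {K Y : D} (hK : F.essImage K)
    {h h' : K ⟶ F.obj (G.obj Y)} (w : h ≫ adj.counit.app Y = h' ≫ adj.counit.app Y) :
    h = h' := by
  obtain ⟨W, ⟨e⟩⟩ := hK
  refine (cancel_epi e.hom).1 ?_
  obtain ⟨a, ha⟩ := F.map_surjective (e.hom ≫ h)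
  obtain ⟨a', ha'⟩ := F.map_surjective (e.hom ≫ h')
  have : (adj.homEquiv W Y).symm a = (adj.homEquiv W Y).symm a' := by
    simp only [homEquiv_counit, ha, ha', Category.assoc, w]
  rw [← ha, ← ha', (adj.homEquiv W Y).symm.injective this]

lemma cancel_unit [G.Full] (adj : F ⊣ G) {Y K : C} (hK : G.essImage K)
    {h h' : G.obj (F.obj Y) ⟶ K} (w : adj.unit.app Y ≫ h = adj.unit.app Y ≫ h') : h = h' := by
  obtain ⟨W, ⟨e⟩⟩ := hK
  refine (cancel_mono e.inv).1 ?_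
  obtain ⟨a, ha⟩ := G.map_surjective (h ≫ e.inv)
  obtain ⟨a', ha'⟩ := G.map_surjective (h' ≫ e.inv)
  have : adj.homEquiv Y W a = adj.homEquiv Y W a' := by
    simp only [homEquiv_unit, ha, ha', ← Category.assoc, w]
  rw [← ha, ← ha', (adj.homEquiv Y W).injective this]

variable [HasZeroMorphisms C] [HasZeroMorphisms D]

lemma eq_zero_of_isZero_obj_left [G.PreservesZeroMorphisms] (adj : F ⊣ G) {X : C} {Y : D}
    (hX : IsZero (F.obj X)) (f : X ⟶ G.obj Y) : f = 0 := by
  rw [← (adj.homEquiv X Y).apply_symm_apply f, hX.eq_of_src ((adj.homEquiv X Y).symm f) 0,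
    homEquiv_unit, G.map_zero, comp_zero]

lemma eq_zero_of_isZero_obj_right [F.PreservesZeroMorphisms] (adj : F ⊣ G) {X : C} {Y : D}
    (hY : IsZero (G.obj Y)) (f : F.obj X ⟶ Y) : f = 0 := by
  rw [← (adj.homEquiv X Y).symm_apply_apply f, hY.eq_of_tgt (adj.homEquiv X Y f) 0,
    homEquiv_counit, F.map_zero, zero_comp]

end Adjunction

namespace ShortComplex

variable {C : Type*} [Category C] [Abelian C] (S : ShortComplex C)

lemma exact_of_comp_f_eq_kernel_ι (k : kernel S.g ⟶ S.X₁) (hk : k ≫ S.f = kernel.ι S.g) :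
    S.Exact := by
  rw [exact_iff_epi_kernel_lift]
  refine epi_of_epi_fac (h := 𝟙 _) (f := k) ?_
  ext
  simp [hk]

lemma exact_of_g_comp_eq_cokernel_π (k : S.X₃ ⟶ cokernel S.f)
    (hk : S.g ≫ k = cokernel.π S.f) :
    S.Exact := by
  rw [exact_iff_mono_cokernel_desc]
  refine mono_of_mono_fac (show cokernel.desc S.f S.g S.zero ≫ k = 𝟙 _ from ?_)
  ext
  simp [hk]

end ShortComplex

end CategoryTheory

namespace Recollement

variable (R : Recollement A' A A'')

lemma isZero_jStar_obj_iLower_obj (W : A') : IsZero (R.jStar.obj (R.iLower.obj W)) :=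
  (R.essImage_iLower _).mp (R.iLower.obj_mem_essImage W)

lemma kernel_mem_essImage_iLower {Y Z : A} (f : Y ⟶ Z) [Mono (R.jStar.map f)] :
    R.iLower.essImage (kernel f) := by
  have := Functor.preservesMonomorphisms_of_adjunction R.adj₁
  refine (R.essImage_iLower _).mpr (IsZero.of_mono_eq_zero (R.jStar.map (kernel.ι f)) ?_)
  rw [← cancel_mono (R.jStar.map f), ← Functor.map_comp, kernel.condition, Functor.map_zero,
    zero_comp]

lemma cokernel_mem_essImage_iLower {Y Z : A} (f : Y ⟶ Z) [Epi (R.jStar.map f)] :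
    R.iLower.essImage (cokernel f) := by
  have := Functor.preservesEpimorphisms_of_adjunction R.adj₂
  refine (R.essImage_iLower _).mpr (IsZero.of_epi_eq_zero (R.jStar.map (cokernel.π f)) ?_)
  rw [← cancel_epi (R.jStar.map f), ← Functor.map_comp, cokernel.condition, Functor.map_zero,
    comp_zero]

lemma mono_adj₄_counit_app (Y : A) : Mono (R.adj₄.counit.app Y) := by
  have : Mono (R.jStar.map (R.adj₄.counit.app Y)) :=
    mono_of_source_iso_zero _ (R.isZero_jStar_obj_iLower_obj _).isoZero
  refine Abelian.mono_of_kernel_ι_eq_zero _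
    (R.adj₄.cancel_counit (R.kernel_mem_essImage_iLower _) ?_)
  rw [kernel.condition, zero_comp]

lemma epi_adj₃_unit_app (Y : A) : Epi (R.adj₃.unit.app Y) := by
  have : Epi (R.jStar.map (R.adj₃.unit.app Y)) :=
    epi_of_target_iso_zero _ (R.isZero_jStar_obj_iLower_obj _).isoZero
  refine Abelian.epi_of_cokernel_π_eq_zero _
    (R.adj₃.cancel_unit (R.cokernel_mem_essImage_iLower _) ?_)
  rw [cokernel.condition, comp_zero]

lemma unit_comp_jStar_map_norm (X : A'') :
    R.adj₁.unit.app X ≫ R.jStar.map (R.norm.app X) = inv (R.adj₂.counit.app X) :=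
  (R.adj₁.homEquiv_unit _ _ _).symm.trans (Equiv.apply_symm_apply _ _)

instance isIso_jStar_map_norm (X : A'') : IsIso (R.jStar.map (R.norm.app X)) :=
  IsIso.of_isIso_fac_left (R.unit_comp_jStar_map_norm X)

end Recollement

/-- There is a short exact sequence of natural transformations
`0 → i_*i^!j_! → j_! → j_* → i_*i^*j_* → 0` whose middle map is the norm. -/
theorem recollement_norm_four_term_exact (R : Recollement A' A A'') (X : A'') :
    Mono (R.adj₄.counit.app (R.jShriek.obj X)) ∧
    Epi (R.adj₃.unit.app (R.jLower.obj X)) ∧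
    (∃ w : R.adj₄.counit.app (R.jShriek.obj X) ≫ R.norm.app X = 0,
      (ShortComplex.mk _ _ w).Exact) ∧
    (∃ w : R.norm.app X ≫ R.adj₃.unit.app (R.jLower.obj X) = 0,
      (ShortComplex.mk _ _ w).Exact) := by
  refine ⟨R.mono_adj₄_counit_app _, R.epi_adj₃_unit_app _,
    ⟨R.adj₂.eq_zero_of_isZero_obj_left (R.isZero_jStar_obj_iLower_obj _) _, ?_⟩,
    ⟨R.adj₁.eq_zero_of_isZero_obj_right (R.isZero_jStar_obj_iLower_obj _) _, ?_⟩⟩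
  · obtain ⟨k, hk⟩ := R.adj₄.exists_comp_counit_eq
      (R.kernel_mem_essImage_iLower (R.norm.app X)) (kernel.ι _)
    exact ShortComplex.exact_of_comp_f_eq_kernel_ι _ k hk
  · obtain ⟨k, hk⟩ := R.adj₃.exists_unit_comp_eq
      (R.cokernel_mem_essImage_iLower (R.norm.app X)) (cokernel.π _)
    exact ShortComplex.exact_of_g_comp_eq_cokernel_π _ k hk
end

section
/- In any recollement situation, for every short exact sequence 0 → X → Y → Z → 0 in A'', there is an exact sequence in A': i^!j_!(X) → i^!j_!(Y) → i^!j_!(Z) → i*j_*(X) → i*j_*(Y) → i*j_*(Z). -/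
open CategoryTheory Limits

universe v u v' u' v'' u''

variable {A' : Type u'} {A : Type u} {A'' : Type u''}
    [Category.{v'} A'] [Category.{v} A] [Category.{v''} A'']
    [Abelian A'] [Abelian A] [Abelian A'']

/-!
The norm `N : j_! ⟶ j_*` has kernel `i_* i^! j_!` and cokernel `i_* i^* j_*`. Indeed `j^* N` is an
isomorphism and `j^*` is exact, so `ker N` and `coker N` are killed by `j^*` and lie in the image of
`i_*`; there a kernel is computed by the counit of the coreflection `i_* ⊣ i^!`, and a cokernel by
the unit of the reflection `i^* ⊣ i_*`. Applied to `0 → X → Y → Z → 0`, `N` maps the right exact row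
`j_! X → j_! Y → j_! Z → 0` to the left exact row `0 → j_* X → j_* Y → j_* Z`, and the snake lemma
gives the six-term sequence in `A`. All its terms lie in the image of the fully faithful exact
functor `i_*`, so it descends to `A'`.
-/

namespace CategoryTheory.Adjunction

variable {C D : Type*} [Category C] [Category D] {F : C ⥤ D} {G : D ⥤ C}

lemma eq_zero_of_isZero_left_obj [HasZeroMorphisms C] [HasZeroMorphisms D]
    [G.PreservesZeroMorphisms] (adj : F ⊣ G) {X : C} {Y : D} (hX : IsZero (F.obj X))
    (f : X ⟶ G.obj Y) : f = 0 := by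
  rw [← (adj.homEquiv X Y).apply_symm_apply f, hX.eq_of_src ((adj.homEquiv X Y).symm f) 0,
    homEquiv_unit, G.map_zero, comp_zero]

lemma eq_zero_of_isZero_right_obj [HasZeroMorphisms C] [HasZeroMorphisms D]
    [F.PreservesZeroMorphisms] (adj : F ⊣ G) {X : C} {Y : D} (hY : IsZero (G.obj Y))
    (f : F.obj X ⟶ Y) : f = 0 := by
  rw [← (adj.homEquiv X Y).symm_apply_apply f, hY.eq_of_tgt (adj.homEquiv X Y f) 0,
    homEquiv_counit, F.map_zero, zero_comp]

lemma counit_app_cancel [F.Full] [F.Faithful] (adj : F ⊣ G) {W : C} {Y : D}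
    {g h : F.obj W ⟶ F.obj (G.obj Y)} (e : g ≫ adj.counit.app Y = h ≫ adj.counit.app Y) :
    g = h := by
  obtain ⟨g, rfl⟩ := F.map_surjective g
  obtain ⟨h, rfl⟩ := F.map_surjective h
  rw [(adj.homEquiv W Y).symm.injective (e : (adj.homEquiv _ _).symm g = _)]

lemma unit_app_cancel [G.Full] [G.Faithful] (adj : F ⊣ G) {W : D} {X : C}
    {g h : G.obj (F.obj X) ⟶ G.obj W} (e : adj.unit.app X ≫ g = adj.unit.app X ≫ h) :
    g = h := by
  obtain ⟨g, rfl⟩ := G.map_surjective g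
  obtain ⟨h, rfl⟩ := G.map_surjective h
  rw [(adj.homEquiv X W).injective (e : adj.homEquiv _ _ g = _)]

noncomputable def isLimitKernelForkCounitApp [HasZeroMorphisms D] [F.Full] [F.Faithful]
    (adj : F ⊣ G) {Y Z : D} {N : Y ⟶ Z} (w : adj.counit.app Y ≫ N = 0) {c : KernelFork N}
    (hc : IsLimit c) (hc' : F.essImage c.pt) :
    IsLimit (KernelFork.ofι (adj.counit.app Y) w) := by
  let e := hc'.getIso
  let ψ : c.pt ⟶ F.obj (G.obj Y) := e.inv ≫ F.map (adj.homEquiv _ _ (e.hom ≫ c.ι))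
  have hψ : ψ ≫ adj.counit.app Y = c.ι := by
    simp [ψ, ← homEquiv_counit]
  let φ : F.obj (G.obj Y) ⟶ c.pt := hc.lift (KernelFork.ofι _ w)
  have hφ : φ ≫ c.ι = adj.counit.app Y := Fork.IsLimit.lift_ι hc
  refine IsLimit.ofIsoLimit hc (Fork.ext ⟨ψ, φ, ?_, ?_⟩ hψ)
  · exact Fork.IsLimit.hom_ext hc (by rw [Category.assoc, hφ, hψ, Category.id_comp])
  · exact adj.counit_app_cancel (by rw [Category.assoc, hψ, hφ]; exact (Category.id_comp _).symm)

noncomputable def isColimitCokernelCoforkUnitApp [HasZeroMorphisms C] [G.Full] [G.Faithful]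
    (adj : F ⊣ G) {X Y : C} {N : Y ⟶ X} (w : N ≫ adj.unit.app X = 0) {c : CokernelCofork N}
    (hc : IsColimit c) (hc' : G.essImage c.pt) :
    IsColimit (CokernelCofork.ofπ (adj.unit.app X) w) := by
  let e := hc'.getIso
  let ψ : G.obj (F.obj X) ⟶ c.pt := G.map ((adj.homEquiv _ _).symm (c.π ≫ e.inv)) ≫ e.hom
  have hψ : adj.unit.app X ≫ ψ = c.π := by
    have h := (adj.homEquiv X _).apply_symm_apply (c.π ≫ e.inv)
    rw [homEquiv_unit] at h
    simp only [ψ, reassoc_of% h, e.inv_hom_id, Category.comp_id]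
  let φ : c.pt ⟶ G.obj (F.obj X) := hc.desc (CokernelCofork.ofπ _ w)
  have hφ : c.π ≫ φ = adj.unit.app X := Cofork.IsColimit.π_desc hc
  refine IsColimit.ofIsoColimit hc (Cofork.ext ⟨φ, ψ, ?_, ?_⟩ hφ)
  · exact Cofork.IsColimit.hom_ext hc (by rw [reassoc_of% hφ, hψ, Category.comp_id])
  · exact adj.unit_app_cancel (by rw [reassoc_of% hψ, hφ]; exact (Category.comp_id _).symm)

end CategoryTheory.Adjunction

namespace CategoryTheory.ShortComplex

variable {C D : Type*} [Category C] [Category D] [Abelian C] [Abelian D]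

lemma exact_of_exact_map_mk (L : C ⥤ D) [L.PreservesZeroMorphisms] [L.PreservesHomology]
    [L.Faithful] {X Y Z : C} {f : X ⟶ Y} {g : Y ⟶ Z} (w : f ≫ g = 0)
    {f' : L.obj X ⟶ L.obj Y} {g' : L.obj Y ⟶ L.obj Z} {w' : f' ≫ g' = 0}
    (hf : L.map f = f') (hg : L.map g = g') (h : (ShortComplex.mk f' g' w').Exact) :
    (ShortComplex.mk f g w).Exact := by
  subst hf hg
  exact ((ShortComplex.mk f g w).exact_map_iff_of_faithful L).1 h

end CategoryTheory.ShortComplex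

namespace Recollement

variable (R : Recollement A' A A'')

instance : R.jShriek.IsLeftAdjoint := ⟨_, ⟨R.adj₁⟩⟩
instance : R.jStar.IsLeftAdjoint := ⟨_, ⟨R.adj₂⟩⟩
instance : R.jStar.IsRightAdjoint := ⟨_, ⟨R.adj₁⟩⟩
instance : R.jLower.IsRightAdjoint := ⟨_, ⟨R.adj₂⟩⟩
instance : R.iLower.IsLeftAdjoint := ⟨_, ⟨R.adj₄⟩⟩
instance : R.iLower.IsRightAdjoint := ⟨_, ⟨R.adj₃⟩⟩

lemma counit_app_comp_norm_app (X : A'') :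
    R.adj₄.counit.app (R.jShriek.obj X) ≫ R.norm.app X = 0 :=
  R.adj₂.eq_zero_of_isZero_left_obj (R.isZero_jStar_obj_iLower_obj _) _

lemma norm_app_comp_unit_app (X : A'') :
    R.norm.app X ≫ R.adj₃.unit.app (R.jLower.obj X) = 0 :=
  R.adj₁.eq_zero_of_isZero_right_obj (R.isZero_jStar_obj_iLower_obj _) _

instance isIso_jStar_map_norm_app (X : A'') : IsIso (R.jStar.map (R.norm.app X)) := by
  have h : R.adj₁.unit.app X ≫ R.jStar.map (R.norm.app X) = inv (R.adj₂.counit.app X) :=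
    (R.adj₁.homEquiv_unit _ _ _).symm.trans ((R.adj₁.homEquiv _ _).apply_symm_apply _)
  have : IsIso (R.adj₁.unit.app X ≫ R.jStar.map (R.norm.app X)) := h ▸ inferInstance
  exact IsIso.of_isIso_comp_left (R.adj₁.unit.app X) _

lemma kernel_norm_app_mem_essImage (X : A'') : R.iLower.essImage (kernel (R.norm.app X)) :=
  (R.essImage_iLower _).2 ((isZero_kernel_of_mono _).of_iso (PreservesKernel.iso _ _))

lemma cokernel_norm_app_mem_essImage (X : A'') :
    R.iLower.essImage (cokernel (R.norm.app X)) :=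
  (R.essImage_iLower _).2 ((isZero_cokernel_of_epi _).of_iso (PreservesCokernel.iso _ _))

noncomputable def isLimitCounitApp (X : A'') :
    IsLimit (KernelFork.ofι _ (R.counit_app_comp_norm_app X)) :=
  R.adj₄.isLimitKernelForkCounitApp _ (kernelIsKernel _) (R.kernel_norm_app_mem_essImage X)

noncomputable def isColimitUnitApp (X : A'') :
    IsColimit (CokernelCofork.ofπ _ (R.norm_app_comp_unit_app X)) :=
  R.adj₃.isColimitCokernelCoforkUnitApp _ (cokernelIsCokernel _)
    (R.cokernel_norm_app_mem_essImage X)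

noncomputable def snakeInput (S : ShortComplex A'') (hS : S.ShortExact) :
    ShortComplex.SnakeInput A where
  L₀ := (S.map (R.jShriek ⋙ R.iShriek)).map R.iLower
  L₁ := S.map R.jShriek
  L₂ := S.map R.jLower
  L₃ := (S.map (R.jLower ⋙ R.iStar)).map R.iLower
  v₀₁ := S.mapNatTrans (Functor.whiskerLeft R.jShriek R.adj₄.counit)
  v₁₂ := S.mapNatTrans R.norm
  v₂₃ := S.mapNatTrans (Functor.whiskerLeft R.jLower R.adj₃.unit)
  w₀₂ := by ext <;> exact R.counit_app_comp_norm_app _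
  w₁₃ := by ext <;> exact R.norm_app_comp_unit_app _
  h₀ := ShortComplex.isLimitOfIsLimitπ _
    ((isLimitMapConeForkEquiv' ShortComplex.π₁ _).symm (R.isLimitCounitApp S.X₁))
    ((isLimitMapConeForkEquiv' ShortComplex.π₂ _).symm (R.isLimitCounitApp S.X₂))
    ((isLimitMapConeForkEquiv' ShortComplex.π₃ _).symm (R.isLimitCounitApp S.X₃))
  h₃ := ShortComplex.isColimitOfIsColimitπ _
    ((isColimitMapCoconeCoforkEquiv' ShortComplex.π₁ _).symm (R.isColimitUnitApp S.X₁))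
    ((isColimitMapCoconeCoforkEquiv' ShortComplex.π₂ _).symm (R.isColimitUnitApp S.X₂))
    ((isColimitMapCoconeCoforkEquiv' ShortComplex.π₃ _).symm (R.isColimitUnitApp S.X₃))
  L₁_exact := hS.exact.map_of_epi_of_preservesCokernel R.jShriek hS.epi_g inferInstance
  epi_L₁_g := have := hS.epi_g; R.jShriek.map_epi S.g
  L₂_exact := hS.exact.map_of_mono_of_preservesKernel R.jLower hS.mono_f inferInstance
  mono_L₂_f := have := hS.mono_f; R.jLower.map_mono S.f

end Recollement

/-- For every short exact sequence `0 → X → Y → Z → 0` in `A''` there is an exact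
sequence `i^!j_!X → i^!j_!Y → i^!j_!Z → i^*j_*X → i^*j_*Y → i^*j_*Z` in `A'`. -/
theorem recollement_snake_six_term_exact (R : Recollement A' A A'')
    (S : ShortComplex A'') (hS : S.ShortExact) :
    ∃ (δ : (R.jShriek ⋙ R.iShriek).obj S.X₃ ⟶ (R.jLower ⋙ R.iStar).obj S.X₁)
      (w₁ : (R.jShriek ⋙ R.iShriek).map S.f ≫ (R.jShriek ⋙ R.iShriek).map S.g = 0)
      (w₂ : (R.jShriek ⋙ R.iShriek).map S.g ≫ δ = 0)
      (w₃ : δ ≫ (R.jLower ⋙ R.iStar).map S.f = 0)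
      (w₄ : (R.jLower ⋙ R.iStar).map S.f ≫ (R.jLower ⋙ R.iStar).map S.g = 0),
      (ShortComplex.mk _ _ w₁).Exact ∧ (ShortComplex.mk _ _ w₂).Exact ∧
      (ShortComplex.mk _ _ w₃).Exact ∧ (ShortComplex.mk _ _ w₄).Exact := by
  let D := R.snakeInput S hS
  let δ : (R.jShriek ⋙ R.iShriek).obj S.X₃ ⟶ (R.jLower ⋙ R.iStar).obj S.X₁ :=
    R.iLower.preimage D.δ
  have hδ : R.iLower.map δ = D.δ := R.iLower.map_preimage _
  have w₂ : (R.jShriek ⋙ R.iShriek).map S.g ≫ δ = 0 := R.iLower.map_injective (by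
    rw [Functor.map_comp, hδ, Functor.map_zero]; exact D.L₀_g_δ)
  have w₃ : δ ≫ (R.jLower ⋙ R.iStar).map S.f = 0 := R.iLower.map_injective (by
    rw [Functor.map_comp, hδ, Functor.map_zero]; exact D.δ_L₃_f)
  exact ⟨δ, (S.map (R.jShriek ⋙ R.iShriek)).zero, w₂, w₃, (S.map (R.jLower ⋙ R.iStar)).zero,
    (ShortComplex.exact_map_iff_of_faithful _ R.iLower).1 D.L₀_exact,
    ShortComplex.exact_of_exact_map_mk R.iLower w₂ rfl hδ D.L₁'_exact,
    ShortComplex.exact_of_exact_map_mk R.iLower w₃ hδ rfl D.L₂'_exact,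
    (ShortComplex.exact_map_iff_of_faithful _ R.iLower).1 D.L₃_exact⟩
end

section
/- In a recollement situation where A has enough projectives, j* ∘ (L_n j_!) = 0 for all n ≥ 1; dually, with enough injectives, j* ∘ (R^n j_*) = 0 for all n ≥ 1. -/
/-!
If `G` is exact, applying it to `L_{n+1} F X = H_{n+1}(F P)`, for a projective resolution `P` of
`X`, gives `H_{n+1}(G F P)`; if `G ∘ F` is exact too, this is `G F (H_{n+1} P) = 0`. In a
recollement `j^*` is exact, being both a left and a right adjoint, and `j^* j_! ≅ 𝟭 ≅ j^* j_*`.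
The case of `R^n j_*` is dual.
-/

open CategoryTheory Limits

universe v u v' u' v'' u''

variable {A' : Type u'} {A : Type u} {A'' : Type u''}
    [Category.{v'} A'] [Category.{v} A] [Category.{v''} A'']
    [Abelian A'] [Abelian A] [Abelian A'']

namespace CategoryTheory.Functor

variable {C D E : Type*} [Category C] [Category D] [Category E]
  [Abelian C] [Abelian D] [Abelian E]
  (F : C ⥤ D) [F.Additive] (G : D ⥤ E) [G.Additive] [G.PreservesHomology]
  [(F ⋙ G).PreservesHomology]

theorem isZero_obj_leftDerived_succ_of_preservesHomology_comp [HasProjectiveResolutions C]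
    (n : ℕ) (X : C) : IsZero (G.obj ((F.leftDerived (n + 1)).obj X)) := by
  let P := projectiveResolution X
  have hP : IsZero ((P.complex.sc (n + 1)).map (F ⋙ G)).homology :=
    (ShortComplex.exact_iff_isZero_homology _).mp ((P.complex_exactAt_succ n).map (F ⋙ G))
  exact hP.of_iso
    (G.mapIso (P.isoLeftDerivedObj F (n + 1)) ≪≫ (ShortComplex.mapHomologyIso _ G).symm)

theorem isZero_obj_rightDerived_succ_of_preservesHomology_comp [HasInjectiveResolutions C]
    (n : ℕ) (X : C) : IsZero (G.obj ((F.rightDerived (n + 1)).obj X)) := by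
  let I := injectiveResolution X
  have hI : IsZero ((I.cocomplex.sc (n + 1)).map (F ⋙ G)).homology :=
    (ShortComplex.exact_iff_isZero_homology _).mp ((I.cocomplex_exactAt_succ n).map (F ⋙ G))
  exact hI.of_iso
    (G.mapIso (I.isoRightDerivedObj F (n + 1)) ≪≫ (ShortComplex.mapHomologyIso _ G).symm)

end CategoryTheory.Functor

namespace Recollement

variable (R : Recollement A' A A'')

instance preservesHomology_jStar : R.jStar.PreservesHomology :=
  have := R.adj₁.rightAdjoint_preservesLimits
  have := R.adj₂.leftAdjoint_preservesColimits
  inferInstance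

instance preservesHomology_jShriek_comp_jStar : (R.jShriek ⋙ R.jStar).PreservesHomology :=
  have := preservesFiniteLimits_of_natIso (asIso R.adj₁.unit)
  have := preservesFiniteColimits_of_natIso (asIso R.adj₁.unit)
  inferInstance

instance preservesHomology_jLower_comp_jStar : (R.jLower ⋙ R.jStar).PreservesHomology :=
  have := preservesFiniteLimits_of_natIso (asIso R.adj₂.counit).symm
  have := preservesFiniteColimits_of_natIso (asIso R.adj₂.counit).symm
  inferInstance

end Recollement

/-- With enough projectives, `j^* ∘ (L_n j_!) = 0` for `n ≥ 1`; dually with enough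
injectives, `j^* ∘ (R^n j_*) = 0` for `n ≥ 1`. -/
theorem recollement_jStar_leftDerived_jShriek_isZero (R : Recollement A' A A'') :
    (∀ [EnoughProjectives A] [EnoughProjectives A'] [EnoughProjectives A''],
      ∀ (n : ℕ), 1 ≤ n → ∀ X : A'',
        IsZero (R.jStar.obj ((R.jShriek.leftDerived n).obj X))) ∧
    (∀ [EnoughInjectives A] [EnoughInjectives A'] [EnoughInjectives A''],
      ∀ (n : ℕ), 1 ≤ n → ∀ X : A'',
        IsZero (R.jStar.obj ((R.jLower.rightDerived n).obj X))) := by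
  constructor
  · intro _ _ _ n hn X
    obtain ⟨m, rfl⟩ := Nat.exists_eq_add_of_le' hn
    exact Functor.isZero_obj_leftDerived_succ_of_preservesHomology_comp _ _ m X
  · intro _ _ _ n hn X
    obtain ⟨m, rfl⟩ := Nat.exists_eq_add_of_le' hn
    exact Functor.isZero_obj_rightDerived_succ_of_preservesHomology_comp _ _ m X
end
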